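/- Let b_0 > 0, c_0 > 0 and a_0 = −b_0 + c_0/2. Let F : (0,∞) → ℝ be twice continuously differentiable and satisfy the ODE (1/2) c_0 y² F''(y) − ( (a_0 − c_0) y + 1 ) F'(y) = 0 for all y > 0 (equivalently, (1/2) c_0 (d/dy)(y² F'(y)) − (a_0 y + 1) F'(y) = 0), together with the boundary conditions lim_{y→0+} F(y) = 0 and lim_{y→+∞} F(y) = 1. Then for all y > 0: F'(y) = (1/Γ(2b_0/c_0)) (2/c_0)^{2b_0/c_0} y^{−1−2b_0/c_0} exp( −2/(c_0 y) ); equivalently, F'(x) = (1/(Γ(2b_0/c_0) x)) (2/(c_0 x))^{2b_0/c_0} exp( −2/(c_0 x) ), which is the density of the law of I_∞ for Brownian motion with drift X_t = b_0 t + √c_0 W_t. -/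

import Mathlib

open MeasureTheory ProbabilityTheory Filter Set

noncomputable section

/-- Left limit of a path, with the convention `x(u−) = x(0)` for `u ≤ 0`. -/
def llim (x : ℝ → ℝ) (u : ℝ) : ℝ :=
  if u ≤ 0 then x 0 else Function.leftLim x u

/-- A path `x : ℝ → ℝ` is càdlàg (on `[0,∞)`): right-continuous at every `u ≥ 0`,
with left limits at every `u > 0`. -/
def IsCadlag (x : ℝ → ℝ) : Prop :=
  (∀ u : ℝ, 0 ≤ u → ContinuousWithinAt x (Set.Ici u) u) ∧
  (∀ u : ℝ, 0 < u → Tendsto x (nhdsWithin u (Set.Iio u)) (nhds (Function.leftLim x u)))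

/-- The process `X` has independent increments. -/
def IndepIncrements {Ω : Type*} [MeasurableSpace Ω] (P : Measure Ω) (X : ℝ → Ω → ℝ) : Prop :=
  ∀ (n : ℕ) (s : Fin (n + 1) → ℝ), (∀ i, 0 ≤ s i) → Monotone s →
    iIndepFun
      (fun (i : Fin n) ω => X (s i.succ) ω - X (s i.castSucc) ω) P

/-- The time reversed process `Y_s = X_t - X_{(t-s)-}`. -/
def Yrev {Ω : Type*} (X : ℝ → Ω → ℝ) (t s : ℝ) (ω : Ω) : ℝ :=
  X t ω - llim (fun u => X u ω) (t - s)

/-- The process `V_s = e^{-Y_s} ∫_0^s e^{Y_u} du`. -/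
def Vproc {Ω : Type*} (X : ℝ → Ω → ℝ) (t s : ℝ) (ω : Ω) : ℝ :=
  Real.exp (-(Yrev X t s ω)) * ∫ u in (0 : ℝ)..s, Real.exp (Yrev X t u ω)

/-- The exponential functional `I_s = ∫_0^s e^{-X_u} du`. -/
def Ifun {Ω : Type*} (X : ℝ → Ω → ℝ) (s : ℝ) (ω : Ω) : ℝ :=
  ∫ u in (0 : ℝ)..s, Real.exp (-(X u ω))

/-- The class `𝒞` of test functions. -/
def MemC (f : ℝ → ℝ) : Prop :=
  ContDiff ℝ 2 f ∧
  (∃ D : ℝ, ∀ y : ℝ, |f y| ≤ D ∧ |deriv f y| ≤ D ∧ |deriv (deriv f) y| ≤ D) ∧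
  (∃ D : ℝ, ∀ y : ℝ, 0 ≤ y → |deriv f y * y| ≤ D) ∧
  (∃ D : ℝ, ∀ y : ℝ, 0 ≤ y → |deriv (deriv f) y * y ^ 2| ≤ D) ∧
  f 0 = 0 ∧ deriv f 0 = 0

/-- `X` is a PII semimartingale with absolutely continuous characteristics `(b, c, K)`,
satisfying the integrability conditions (2) and (3) of the paper. -/
def HasACCharacteristics {Ω : Type*} [MeasurableSpace Ω] (P : Measure Ω) (X : ℝ → Ω → ℝ)
    (b c : ℝ → ℝ) (K : ℝ → Measure ℝ) : Prop :=
  (∀ u : ℝ, 0 ≤ c u) ∧ (∀ u : ℝ, K u {0} = 0) ∧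
  (∀ t : ℝ, 0 < t → IntegrableOn b (Set.Ioc 0 t) ∧ IntegrableOn c (Set.Ioc 0 t)) ∧
  (∀ r s : ℝ, 0 ≤ r → r ≤ s → ∀ lam : ℝ,
    ∫ ω, Complex.exp (Complex.I * (lam : ℂ) * ((X s ω - X r ω : ℝ) : ℂ)) ∂P =
      Complex.exp (∫ u in r..s,
        (Complex.I * (lam : ℂ) * (b u : ℂ) - (lam : ℂ) ^ 2 * (c u : ℂ) / 2 +
          ∫ x : ℝ, (Complex.exp (Complex.I * (lam : ℂ) * (x : ℂ)) - 1
            - Complex.I * (lam : ℂ) * (x : ℂ)) ∂(K u)))) ∧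
  (∀ t : ℝ, 0 < t →
    (∫⁻ u in Set.Ioc (0 : ℝ) t, ∫⁻ x : ℝ, ENNReal.ofReal (min (x ^ 2) 1) ∂(K u)) < ⊤ ∧
    (∫⁻ u in Set.Ioc (0 : ℝ) t,
      ∫⁻ x in {x : ℝ | 1 < |x|}, ENNReal.ofReal (Real.exp |x|) ∂(K u)) < ⊤)

/-- `ā_s = -b_{t-s} + c_{t-s}/2 + ∫ (e^{-x} - 1 + x) K_{t-s}(dx)`. -/
def abar (b c : ℝ → ℝ) (K : ℝ → Measure ℝ) (t s : ℝ) : ℝ :=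
  -b (t - s) + c (t - s) / 2 + ∫ x : ℝ, (Real.exp (-x) - 1 + x) ∂(K (t - s))

/-- The generator `𝒜_s` of the Markov process `V`. -/
def genA (b c : ℝ → ℝ) (K : ℝ → Measure ℝ) (t s : ℝ) (f : ℝ → ℝ) (y : ℝ) : ℝ :=
  (1 + y * abar b c K t s) * deriv f y + (1 / 2) * c (t - s) * y ^ 2 * deriv (deriv f) y +
    ∫ x : ℝ, (f (y * Real.exp (-x)) - f y - deriv f y * y * (Real.exp (-x) - 1)) ∂(K (t - s))

/-- `X` is a Lévy process with triplet `(b0, c0, K0)`. -/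
def IsLevy {Ω : Type*} [MeasurableSpace Ω] (P : Measure Ω) (X : ℝ → Ω → ℝ)
    (b0 c0 : ℝ) (K0 : Measure ℝ) : Prop :=
  (∀ᵐ ω ∂P, X 0 ω = 0) ∧
  (∀ᵐ ω ∂P, IsCadlag fun s => X s ω) ∧
  (∀ s : ℝ, Measurable (X s)) ∧
  IndepIncrements P X ∧
  (∀ r s : ℝ, 0 ≤ r → r ≤ s →
    P.map (fun ω => X s ω - X r ω) = P.map (X (s - r))) ∧
  (∀ r : ℝ, 0 < r → ∀ᵐ ω ∂P, Function.leftLim (fun u => X u ω) r = X r ω) ∧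
  0 ≤ c0 ∧ K0 {0} = 0 ∧
  (∫⁻ x : ℝ, ENNReal.ofReal (min (x ^ 2) 1) ∂K0) < ⊤ ∧
  (∀ s : ℝ, 0 ≤ s → ∀ lam : ℝ,
    ∫ ω, Complex.exp (Complex.I * (lam : ℂ) * ((X s ω : ℝ) : ℂ)) ∂P =
      Complex.exp ((s : ℂ) * (Complex.I * (lam : ℂ) * (b0 : ℂ) - (lam : ℂ) ^ 2 * (c0 : ℂ) / 2 +
        ∫ x : ℝ, (Complex.exp (Complex.I * (lam : ℂ) * (x : ℂ)) - 1
          - Complex.I * (lam : ℂ) * (x : ℂ)) ∂K0)))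

/-- `a_0 = -b_0 + c_0/2 + ∫ (e^{-x} - 1 + x) K_0(dx)`. -/
def a0 (b0 c0 : ℝ) (K0 : Measure ℝ) : ℝ :=
  -b0 + c0 / 2 + ∫ x : ℝ, (Real.exp (-x) - 1 + x) ∂K0

/-- Condition (2): `∫ (x² ∧ 1) K_0(dx) < ∞`. -/
def LevyCond1 (K0 : Measure ℝ) : Prop :=
  (∫⁻ x : ℝ, ENNReal.ofReal (min (x ^ 2) 1) ∂K0) < ⊤

/-- Condition (3): `∫_{|x|>1} e^{|x|} K_0(dx) < ∞`. -/
def LevyCond2 (K0 : Measure ℝ) : Prop :=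
  (∫⁻ x in {x : ℝ | 1 < |x|}, ENNReal.ofReal (Real.exp |x|) ∂K0) < ⊤

/-- `I_∞ = ∫_0^∞ e^{-X_u} du` (defined via the Lebesgue integral of the
nonnegative integrand). -/
def Iinf {Ω : Type*} (X : ℝ → Ω → ℝ) (ω : Ω) : ℝ :=
  (∫⁻ u in Set.Ioi (0 : ℝ), ENNReal.ofReal (Real.exp (-(X u ω)))).toReal

/-!
Dividing the equation by `c₀ y² / 2` shows that `F'` solves the linear first-order equation
`g' = (β / y² - (1 + α) / y) g` on `(0, ∞)`, where `α = 2 b₀ / c₀` and `β = 2 / c₀`. Its solutions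
are the multiples of the inverse gamma kernel `y ^ (-1 - α) * exp (-β / y)`, which solves it as
well. The boundary conditions say that `F'` has total mass `1` on `(0, ∞)`, and the substitution
`y = 1 / t` turns the integral of the kernel into the gamma integral `Γ(α) / β ^ α`; this fixes the
constant.
-/

open Topology

theorem ContDiffOn.hasDerivAt_deriv {𝕜 E : Type*} [NontriviallyNormedField 𝕜]
    [NormedAddCommGroup E] [NormedSpace 𝕜 E] {f : 𝕜 → E} {s : Set 𝕜} {n : WithTop ℕ∞} {y : 𝕜}
    (hf : ContDiffOn 𝕜 n f s) (hn : n ≠ 0) (hs : IsOpen s) (hy : y ∈ s) :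
    HasDerivAt f (deriv f y) y :=
  ((hf.differentiableOn hn y hy).differentiableAt (hs.mem_nhds hy)).hasDerivAt

theorem IsOpen.exists_eq_const_mul_of_hasDerivAt_eq_mul {𝕜 : Type*} [RCLike 𝕜] {s : Set 𝕜}
    {g φ p : 𝕜 → 𝕜} (hs : IsOpen s) (hs' : IsPreconnected s)
    (hg : ∀ y ∈ s, HasDerivAt g (p y * g y) y) (hφ : ∀ y ∈ s, HasDerivAt φ (p y * φ y) y)
    (hφ0 : ∀ y ∈ s, φ y ≠ 0) : ∃ C, s.EqOn g (C * φ ·) := by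
  have hquot : ∀ y ∈ s, HasDerivAt (fun x => g x / φ x) 0 y := fun y hy => by
    have h := (hg y hy).div (hφ y hy) (hφ0 y hy)
    rwa [mul_assoc, mul_left_comm (g y), sub_self, zero_div] at h
  obtain ⟨C, hC⟩ := hs.exists_is_const_of_deriv_eq_zero hs'
    (fun y hy => (hquot y hy).differentiableAt.differentiableWithinAt)
    (fun y hy => (hquot y hy).deriv)
  refine ⟨C, fun y hy => ?_⟩
  beta_reduce
  rw [← hC y hy, div_mul_cancel₀ _ (hφ0 y hy)]

theorem integral_Ioi_of_hasDerivAt_of_tendsto_nhdsGT {E : Type*} [NormedAddCommGroup E]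
    [NormedSpace ℝ E] [CompleteSpace E] {f f' : ℝ → E} {a : ℝ} {m n : E}
    (hderiv : ∀ x ∈ Ioi a, HasDerivAt f (f' x) x) (hint : IntegrableOn f' (Ioi a))
    (ha : Tendsto f (𝓝[>] a) (𝓝 m)) (hf : Tendsto f atTop (𝓝 n)) :
    ∫ x in Ioi a, f' x = n - m := by
  have hcont : ContinuousWithinAt (Function.update f a m) (Ici a) a := by
    rwa [continuousWithinAt_update_same, Ici_sdiff_left]
  have hderiv' : ∀ x ∈ Ioi a, HasDerivAt (Function.update f a m) (f' x) x := fun x hx =>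
    (hderiv x hx).congr_of_eventuallyEq <| by
      filter_upwards [eventually_ne_nhds (ne_of_gt hx)] with y hy
      exact Function.update_of_ne hy m f
  have hf' : Tendsto (Function.update f a m) atTop (𝓝 n) := hf.congr' <| by
    filter_upwards [eventually_ne_atTop a] with x hx
    exact (Function.update_of_ne hx m f).symm
  simpa using integral_Ioi_of_hasDerivAt_of_tendsto hcont hderiv' hint hf'

def invGammaKernel (α β y : ℝ) : ℝ := y ^ (-1 - α) * Real.exp (-β / y)

section InvGammaKernel

variable {α β y : ℝ}

theorem invGammaKernel_pos (hy : 0 < y) : 0 < invGammaKernel α β y := by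
  unfold invGammaKernel; positivity

theorem hasDerivAt_invGammaKernel (hy : 0 < y) :
    HasDerivAt (invGammaKernel α β) ((β / y ^ 2 - (1 + α) / y) * invGammaKernel α β y) y := by
  have hpow := Real.hasDerivAt_rpow_const (p := -1 - α) (Or.inl hy.ne')
  have hexp := ((hasDerivAt_inv hy.ne').const_mul (-β)).exp
  have hfun : invGammaKernel α β = fun x => x ^ (-1 - α) * Real.exp (-β * x⁻¹) := by
    ext x; rw [invGammaKernel, div_eq_mul_inv]
  rw [hfun]
  refine (hpow.mul hexp).congr_deriv ?_
  rw [show -1 - α - 1 = (-1 - α) + (-1) by ring, Real.rpow_add hy, Real.rpow_neg_one]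
  field_simp
  ring

/-- The substitution `y = t⁻¹`, in the shape of `integral_comp_rpow_Ioi` with `p = -1`. -/
theorem invGammaKernel_eqOn_comp_inv :
    EqOn (invGammaKernel α β)
      (fun y => (|(-1 : ℝ)| * y ^ ((-1 : ℝ) - 1)) •
        ((y ^ (-1 : ℝ)) ^ (α - 1) * Real.exp (-(β * y ^ (-1 : ℝ))))) (Ioi 0) := by
  intro y (hy : 0 < y)
  simp only [invGammaKernel, smul_eq_mul]
  rw [← Real.rpow_mul hy.le, ← mul_assoc, abs_neg, abs_one, one_mul, ← Real.rpow_add hy,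
    Real.rpow_neg_one, div_eq_mul_inv]
  ring_nf

theorem integrableOn_invGammaKernel (hα : 0 < α) (hβ : 0 < β) :
    IntegrableOn (invGammaKernel α β) (Ioi 0) := by
  refine (integrableOn_congr_fun invGammaKernel_eqOn_comp_inv measurableSet_Ioi).2 ?_
  refine (integrableOn_Ioi_comp_rpow_iff
    (fun t => t ^ (α - 1) * Real.exp (-(β * t))) (by norm_num)).2 ?_
  simpa [Real.rpow_one] using
    integrableOn_rpow_mul_exp_neg_mul_rpow (s := α - 1) (p := 1) (by linarith) one_pos hβ

theorem integral_invGammaKernel (hα : 0 < α) (hβ : 0 < β) :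
    ∫ y in Ioi 0, invGammaKernel α β y = Real.Gamma α / β ^ α := by
  rw [setIntegral_congr_fun measurableSet_Ioi invGammaKernel_eqOn_comp_inv]
  refine (integral_comp_rpow_Ioi (fun t => t ^ (α - 1) * Real.exp (-(β * t)))
    (by norm_num : (-1 : ℝ) ≠ 0)).trans ?_
  rw [Real.integral_rpow_mul_exp_neg_mul_Ioi hα hβ, one_div, Real.inv_rpow hβ.le]
  ring

end InvGammaKernel

/-- explicit solution of the stationary equation in the Brownian case
(`a_0 = -b_0 + c_0/2`, no jumps): the density of `I_∞` for Brownian motion with drift. -/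
theorem stmt_17 (b0 c0 : ℝ) (hb : 0 < b0) (hc : 0 < c0) (F : ℝ → ℝ)
    (hF : ContDiffOn ℝ 2 F (Set.Ioi 0))
    (hode : ∀ y : ℝ, 0 < y →
      (1 / 2) * c0 * y ^ 2 * deriv (deriv F) y
        - (((-b0 + c0 / 2) - c0) * y + 1) * deriv F y = 0)
    (h0 : Tendsto F (nhdsWithin 0 (Set.Ioi 0)) (nhds 0))
    (hinf : Tendsto F atTop (nhds 1)) :
    ∀ y : ℝ, 0 < y →
      deriv F y = (1 / Real.Gamma (2 * b0 / c0)) * (2 / c0) ^ (2 * b0 / c0) *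
        y ^ (-1 - 2 * b0 / c0) * Real.exp (-2 / (c0 * y)) := by
  set α := 2 * b0 / c0 with hα_def
  have hα : 0 < α := by positivity
  have hβ : 0 < 2 / c0 := by positivity
  have hF' : ∀ y ∈ Ioi (0 : ℝ), HasDerivAt F (deriv F y) y := fun y hy =>
    hF.hasDerivAt_deriv (by norm_num) isOpen_Ioi hy
  have hF'' : ∀ y ∈ Ioi (0 : ℝ),
      HasDerivAt (deriv F) ((2 / c0 / y ^ 2 - (1 + α) / y) * deriv F y) y := fun y hy => by
    refine ((hF.deriv_of_isOpen isOpen_Ioi (m := 1) (by norm_num)).hasDerivAt_deriv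
      (by norm_num) isOpen_Ioi hy).congr_deriv ?_
    have hy0 : y ≠ 0 := ne_of_gt hy
    rw [hα_def]
    field_simp
    linear_combination 2 * hode y hy
  obtain ⟨C, hC⟩ := isOpen_Ioi.exists_eq_const_mul_of_hasDerivAt_eq_mul isPreconnected_Ioi hF''
    (fun y hy => hasDerivAt_invGammaKernel hy) (fun y hy => (invGammaKernel_pos hy).ne')
  have hmass : C * (Real.Gamma α / (2 / c0) ^ α) = 1 := by
    rw [← integral_invGammaKernel hα hβ, ← integral_const_mul,
      ← setIntegral_congr_fun measurableSet_Ioi hC]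
    simpa using integral_Ioi_of_hasDerivAt_of_tendsto_nhdsGT hF'
      (IntegrableOn.congr_fun ((integrableOn_invGammaKernel hα hβ).const_mul C) hC.symm
        measurableSet_Ioi)
      h0 hinf
  intro y hy
  rw [hC hy, eq_div_of_mul_eq (by positivity) hmass]
  simp only [invGammaKernel]
  field_simp

end
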